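/- Let m ≥ 2 be an integer and let k be a positive multiple of m. Let S be a finite set of k points in ℝ² and let A ⊆ S with |A| = k/m be such that every point of A has x-coordinate at most the x-coordinate of every point of S∖A. Then w_x(A) ≤ w_x(S)/(m−1). (This bounds the intra-strip x-weight of an extreme strip containing a 1/m fraction of the points.) -/

import Mathlib

/-!
Put `B = S \ A`. For `p, q ∈ A` and every `r ∈ B` the triangle inequality gives
`d(p,q) ≤ d(p,r) + d(q,r)`; summing over `r ∈ B` and `p, q ∈ A` yields
`|B| · w(A) ≤ |A| · w(A,B)`, where `w(A,B)` is the cross weight. Since `|B| = (m-1)|A|`,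
this is `(m-1) · w(A) ≤ w(A,B) ≤ w(S)`.
-/

open Finset

/-- The sum of x-coordinate distances over all unordered pairs of distinct points of `S`. -/
noncomputable def wx (S : Finset (Fin 2 → ℝ)) : ℝ := (∑ p ∈ S, ∑ q ∈ S, |p 0 - q 0|) / 2

section DoubleSum

variable {ι α : Type*} [PseudoMetricSpace α] (f : ι → α)

theorem card_mul_sum_dist_le (A B : Finset ι) :
    (#B : ℝ) * ∑ p ∈ A, ∑ q ∈ A, dist (f p) (f q)
      ≤ 2 * #A * ∑ p ∈ A, ∑ r ∈ B, dist (f p) (f r) :=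
  calc (#B : ℝ) * ∑ p ∈ A, ∑ q ∈ A, dist (f p) (f q)
      = ∑ p ∈ A, ∑ q ∈ A, ∑ _r ∈ B, dist (f p) (f q) := by
        simp only [sum_const, nsmul_eq_mul, mul_sum]
    _ ≤ ∑ p ∈ A, ∑ q ∈ A, ∑ r ∈ B, (dist (f p) (f r) + dist (f q) (f r)) := by
        gcongr with p _ q _ r _
        exact dist_triangle_right _ _ _
    _ = 2 * #A * ∑ p ∈ A, ∑ r ∈ B, dist (f p) (f r) := by
        simp only [sum_add_distrib, sum_const, nsmul_eq_mul, ← mul_sum]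
        ring

theorem sum_sum_dist_union [DecidableEq ι] {A B : Finset ι} (h : Disjoint A B) :
    ∑ p ∈ A ∪ B, ∑ q ∈ A ∪ B, dist (f p) (f q)
      = ∑ p ∈ A, ∑ q ∈ A, dist (f p) (f q) + ∑ p ∈ B, ∑ q ∈ B, dist (f p) (f q)
        + 2 * ∑ p ∈ A, ∑ q ∈ B, dist (f p) (f q) := by
  have hsymm : ∑ p ∈ B, ∑ q ∈ A, dist (f p) (f q) = ∑ p ∈ A, ∑ q ∈ B, dist (f p) (f q) := by
    rw [sum_comm]
    simp only [dist_comm]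
  simp only [sum_union h, sum_add_distrib, hsymm]
  ring

theorem mul_sum_sum_dist_le [DecidableEq ι] {A S : Finset ι} (hA : A ⊆ S) {r : ℝ}
    (hr : r * #A ≤ #(S \ A)) :
    r * ∑ p ∈ A, ∑ q ∈ A, dist (f p) (f q) ≤ ∑ p ∈ S, ∑ q ∈ S, dist (f p) (f q) := by
  set a := ∑ p ∈ A, ∑ q ∈ A, dist (f p) (f q)
  set c := ∑ p ∈ A, ∑ q ∈ S \ A, dist (f p) (f q)
  have ha : 0 ≤ a := by positivity
  have htotal : ∑ p ∈ S, ∑ q ∈ S, dist (f p) (f q)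
      = a + ∑ p ∈ S \ A, ∑ q ∈ S \ A, dist (f p) (f q) + 2 * c := by
    rw [← sum_sum_dist_union f disjoint_sdiff, union_sdiff_of_subset hA]
  rcases (#A).eq_zero_or_pos with hA0 | hApos
  · have ha0 : a = 0 := by simp [a, card_eq_zero.mp hA0]
    rw [ha0, mul_zero]
    positivity
  have hcross : r * #A * a ≤ 2 * #A * c :=
    (mul_le_mul_of_nonneg_right hr ha).trans (card_mul_sum_dist_le f A (S \ A))
  have hra : r * a ≤ 2 * c := by
    have hApos' : (0 : ℝ) < #A := by exact_mod_cast hApos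
    nlinarith
  rw [htotal]
  nlinarith [show 0 ≤ ∑ p ∈ S \ A, ∑ q ∈ S \ A, dist (f p) (f q) by positivity]

end DoubleSum

theorem end_strip_bound_general
    (m k : ℕ) (hm : 2 ≤ m) (hmk : m ∣ k)
    (S : Finset (Fin 2 → ℝ)) (hScard : S.card = k)
    (A : Finset (Fin 2 → ℝ)) (hA : A ⊆ S) (hAcard : A.card = k / m) :
    wx A ≤ wx S / ((m : ℝ) - 1) := by
  obtain ⟨t, rfl⟩ := hmk
  have hAt : #A = t := by rw [hAcard, Nat.mul_div_cancel_left _ (by omega)]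
  have hcard : ((m : ℝ) - 1) * #A ≤ #(S \ A) := by
    rw [card_sdiff_of_subset hA, hScard, hAt, Nat.cast_sub (Nat.le_mul_of_pos_left t (by omega))]
    push_cast
    linarith
  have hm1 : (0 : ℝ) < m - 1 := by
    have : (2 : ℝ) ≤ m := by exact_mod_cast hm
    linarith
  have key := mul_sum_sum_dist_le (fun p : Fin 2 → ℝ => p 0) hA hcard
  simp only [Real.dist_eq] at key
  rw [wx, wx, le_div_iff₀ hm1]
  linarith

/-- If `A` consists of `k/m` points of a `k`-point set `S` (with `m ≥ 2` and `m ∣ k`) and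
every point of `A` has x-coordinate at most that of every point of `S∖A`, then the
intra-strip x-weight of `A` satisfies `w_x(A) ≤ w_x(S)/(m−1)`. -/
theorem end_strip_bound
    (m k : ℕ) (hm : 2 ≤ m) (hk : 0 < k) (hmk : m ∣ k)
    (S : Finset (Fin 2 → ℝ)) (hScard : S.card = k)
    (A : Finset (Fin 2 → ℝ)) (hA : A ⊆ S) (hAcard : A.card = k / m)
    (hext : ∀ p ∈ A, ∀ q ∈ S \ A, p 0 ≤ q 0) :
    wx A ≤ wx S / ((m : ℝ) - 1) :=
  end_strip_bound_general m k hm hmk S hScard A hA hAcard
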